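/- Let E, F be Hilbert spaces and let 𝐌_ζ and 𝐌_ξ denote the tuples of coordinate multiplication operators on H²_E(𝔻_2^∞) and H²_F(𝔻_2^∞) respectively. If T : H²_F(𝔻_2^∞) → H²_E(𝔻_2^∞) is a bounded linear operator satisfying T M_{ξ_n} = M_{ζ_n} T for every n ∈ ℕ, then there exists an operator-valued function Ψ ∈ H^∞_{B(F,E)}(𝔻_2^∞) such that T = M_Ψ, i.e. (TG)(ζ) = Ψ(ζ)G(ζ) for all G ∈ H²_F(𝔻_2^∞) and ζ ∈ 𝔻_2^∞. -/

import Mathlib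

/- Common definitions for formalizing "Dilation theory and analytic model theory for
doubly commuting sequences of C_{·0}-contractions" by H. Dan and K. Guo. -/

open Filter Topology ContinuousLinearMap

noncomputable section

universe u v

namespace DCPaper

variable {H : Type u} [NormedAddCommGroup H] [InnerProductSpace ℂ H] [CompleteSpace H]
variable {K : Type v} [NormedAddCommGroup K] [InnerProductSpace ℂ K] [CompleteSpace K]

/-- `T` is a contraction of class `C_{·0}`: `‖T‖ ≤ 1` and `T^{*k} → 0` in the strong
operator topology. -/
def IsCzeroContraction (T : H →L[ℂ] H) : Prop :=
  ‖T‖ ≤ 1 ∧ ∀ x : H, Tendsto (fun k : ℕ => (adjoint T ^ k) x) atTop (𝓝 0)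

/-- `S` and `T` doubly commute: `ST = TS` and `ST* = T*S`. -/
def DoublyCommute (S T : H →L[ℂ] H) : Prop :=
  S * T = T * S ∧ S * adjoint T = adjoint T * S

/-- `𝐓 ∈ 𝒟𝒞(H)`: a doubly commuting sequence of `C_{·0}`-contractions. -/
def IsDCSeq (T : ℕ → H →L[ℂ] H) : Prop :=
  (∀ n, IsCzeroContraction (T n)) ∧ ∀ m n : ℕ, m ≠ n → DoublyCommute (T m) (T n)

/-- A pure isometry: an isometry of class `C_{·0}`. -/
def IsPureIsometry (V : H →L[ℂ] H) : Prop :=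
  (∀ x : H, ‖V x‖ = ‖x‖) ∧
    ∀ x : H, Tendsto (fun k : ℕ => (adjoint V ^ k) x) atTop (𝓝 0)

/-- `𝐕 ∈ 𝒟𝒫(H)`: a doubly commuting sequence of pure isometries. -/
def IsDPSeq (V : ℕ → H →L[ℂ] H) : Prop :=
  (∀ n, IsPureIsometry (V n)) ∧ ∀ m n : ℕ, m ≠ n → DoublyCommute (V m) (V n)

/-- The defect operator `D_T = (I - T*T)^{1/2}` of a contraction `T`. -/
def defectOp (T : H →L[ℂ] H) : H →L[ℂ] H :=
  CFC.sqrt (1 - adjoint T * T)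

/-- The finite product `D_{T_0} ⋯ D_{T_{N-1}}` of defect operators. -/
def partialDefect (T : ℕ → H →L[ℂ] H) (N : ℕ) : H →L[ℂ] H :=
  ((List.range N).map fun n => defectOp (T n)).prod

/-- `D` is the defect operator `D_𝐓` of the sequence `𝐓`, i.e. the strong operator
topology limit of the partial products `D_{T_1} ⋯ D_{T_n}`. -/
def IsSeqDefect (T : ℕ → H →L[ℂ] H) (D : H →L[ℂ] H) : Prop :=
  ∀ x : H, Tendsto (fun N : ℕ => partialDefect T N x) atTop (𝓝 (D x))

/-- `φ_a(T) = (aI - T)(I - āT)⁻¹` (Möbius transform of an operator). -/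
def mobius (a : ℂ) (T : H →L[ℂ] H) : H →L[ℂ] H :=
  (a • (1 : H →L[ℂ] H) - T) * Ring.inverse (1 - (starRingEnd ℂ a) • T)

/-- Membership in `𝔻^∞`, the countable product of copies of the open unit disk. -/
def InPolydisc (l : ℕ → ℂ) : Prop := ∀ n, ‖l n‖ < 1

/-- Membership in the Hilbert multidisc `𝔻_2^∞ = {ζ ∈ ℓ² : |ζ_n| < 1 for all n}`. -/
def InHilbertMultidisc (l : ℕ → ℂ) : Prop :=
  (∀ n, ‖l n‖ < 1) ∧ Summable fun n => ‖l n‖ ^ 2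

/-- The sequence `Φ_λ(𝐓)* = (φ_{λ_1}(T_1)*, φ_{λ_2}(T_2)*, …)`. -/
def mobiusStarSeq (l : ℕ → ℂ) (T : ℕ → H →L[ℂ] H) : ℕ → H →L[ℂ] H :=
  fun n => adjoint (mobius (l n) (T n))

/-- `𝐓^α = T_1^{α_1} ⋯ T_n^{α_n}` for a finitely supported multi-index `α`. -/
def opPow (T : ℕ → H →L[ℂ] H) (α : ℕ →₀ ℕ) : H →L[ℂ] H :=
  ((List.range (α.support.sup id + 1)).map fun n => T n ^ α n).prod

/-- Restriction of a continuous linear map to an invariant submodule. -/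
def clmRestrict (f : H →L[ℂ] H) {M : Submodule ℂ H}
    (hf : ∀ x ∈ M, f x ∈ M) : M →L[ℂ] M :=
  { toLinearMap := (f : H →ₗ[ℂ] H).restrict hf
    cont := (f.continuous.comp continuous_subtype_val).subtype_mk _ }

/-- Compression `P_M A|_M` of an operator `A` to a closed subspace `M`. -/
def compress {M : Submodule ℂ H} (hM : IsClosed (M : Set H))
    (A : H →L[ℂ] H) : M →L[ℂ] M :=
  haveI : CompleteSpace M := hM.completeSpace_coe
  (M.orthogonalProjection).comp (A.comp M.subtypeL)

/-- `𝐕` is a regular isometric dilation of `𝐓`, where `J : H →L[ℂ] K` is the isometric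
inclusion of `H` into the dilation space `K`:  each `V n` is an isometry,
`𝐓^α = P_H 𝐕^α |_H` for every multi-index `α`, and
`𝐓^{*α} 𝐓^β = P_H 𝐕^{*α} 𝐕^β |_H` whenever `min (α n) (β n) = 0` for all `n`. -/
def IsRegularIsometricDilation (T : ℕ → H →L[ℂ] H) (J : H →L[ℂ] K)
    (V : ℕ → K →L[ℂ] K) : Prop :=
  (∀ x : H, ‖J x‖ = ‖x‖) ∧ (∀ n, ∀ y : K, ‖V n y‖ = ‖y‖) ∧
  (∀ (α : ℕ →₀ ℕ) (x : H), opPow T α x = adjoint J (opPow V α (J x))) ∧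
  ∀ α β : ℕ →₀ ℕ, (∀ n, min (α n) (β n) = 0) → ∀ x : H,
    adjoint (opPow T α) (opPow T β x) =
      adjoint J (adjoint (opPow V α) (opPow V β (J x)))

/-- Minimality of a dilation: the smallest closed subspace of `K` containing `J(H)` and
invariant under every `V n` is `K` itself. -/
def IsMinimalFor (J : H →L[ℂ] K) (V : ℕ → K →L[ℂ] K) : Prop :=
  ∀ M : Submodule ℂ K, IsClosed (M : Set K) → (∀ x : H, J x ∈ M) →
    (∀ n, ∀ y ∈ M, V n y ∈ M) → M = ⊤

/-- A sequence of isometries is of Beurling type: the smallest closed subspace containing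
the defect space `𝔇_{𝐕*}` (the closed range of the defect operator `D_{𝐕*}`) and
invariant under every `V n` is the whole space. -/
def IsBeurlingSeq (V : ℕ → K →L[ℂ] K) : Prop :=
  ∃ D : K →L[ℂ] K, IsSeqDefect (fun n => adjoint (V n)) D ∧
    ∀ M : Submodule ℂ K, IsClosed (M : Set K) → (∀ y : K, D y ∈ M) →
      (∀ n, ∀ y ∈ M, V n y ∈ M) → M = ⊤

/-- A sequence of isometries is of quasi-Beurling type: `Φ_λ(𝐕)` is of Beurling type for
some `λ ∈ 𝔻^∞`. -/
def IsQuasiBeurlingSeq (V : ℕ → K →L[ℂ] K) : Prop :=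
  ∃ l : ℕ → ℂ, InPolydisc l ∧ IsBeurlingSeq fun n => mobius (l n) (V n)

/-- `𝐓 ∈ 𝒟𝒞` is of Beurling type: its minimal regular isometric dilation is of
Beurling type. -/
def IsBeurlingDC (T : ℕ → H →L[ℂ] H) : Prop :=
  ∃ (K' : Type u) (_ : NormedAddCommGroup K') (_ : InnerProductSpace ℂ K')
    (_ : CompleteSpace K') (J : H →L[ℂ] K') (V : ℕ → K' →L[ℂ] K'),
    IsRegularIsometricDilation T J V ∧ IsMinimalFor J V ∧ IsBeurlingSeq V

/-- `𝐓 ∈ 𝒟𝒞` is of quasi-Beurling type: its minimal regular isometric dilation is of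
quasi-Beurling type. -/
def IsQuasiBeurlingDC (T : ℕ → H →L[ℂ] H) : Prop :=
  ∃ (K' : Type u) (_ : NormedAddCommGroup K') (_ : InnerProductSpace ℂ K')
    (_ : CompleteSpace K') (J : H →L[ℂ] K') (V : ℕ → K' →L[ℂ] K'),
    IsRegularIsometricDilation T J V ∧ IsMinimalFor J V ∧ IsQuasiBeurlingSeq V

/-- The family `Mz` of operators on the `E`-valued Hardy space
`H²_E(𝔻_2^∞) = lp (fun _ : (ℕ →₀ ℕ) => E) 2` is the tuple of coordinate multiplication
operators `𝐌_ζ`, characterized on the canonical orthonormal system. -/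
def IsCoordMult {E : Type*} [NormedAddCommGroup E] [InnerProductSpace ℂ E]
    [CompleteSpace E]
    (Mz : ℕ → lp (fun _ : (ℕ →₀ ℕ) => E) 2 →L[ℂ] lp (fun _ : (ℕ →₀ ℕ) => E) 2) : Prop :=
  ∀ (n : ℕ) (α : ℕ →₀ ℕ) (x : E),
    Mz n (lp.single 2 α x) = lp.single 2 (α + Finsupp.single n 1) x

/-- The one-variable shift `M_z` on the `E`-valued Hardy space of the disk
`H²_E(𝔻) = lp (fun _ : ℕ => E) 2`, characterized on the canonical orthonormal system. -/
def IsOneShift {E : Type*} [NormedAddCommGroup E] [InnerProductSpace ℂ E]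
    [CompleteSpace E]
    (S : lp (fun _ : ℕ => E) 2 →L[ℂ] lp (fun _ : ℕ => E) 2) : Prop :=
  ∀ (k : ℕ) (x : E), S (lp.single 2 k x) = lp.single 2 (k + 1) x

/-- The monomial `ζ^α`. -/
def monomial (ζ : ℕ → ℂ) (α : ℕ →₀ ℕ) : ℂ := α.prod fun n k => ζ n ^ k

/-- Evaluation of an element of the vector-valued Hardy space `H²_E(𝔻_2^∞)` at a point
`ζ` of the Hilbert multidisc: `F(ζ) = Σ_α ζ^α • F_α`. -/
def hardyEval {E : Type*} [NormedAddCommGroup E] [InnerProductSpace ℂ E]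
    (F : lp (fun _ : (ℕ →₀ ℕ) => E) 2) (ζ : ℕ → ℂ) : E :=
  ∑' α : ℕ →₀ ℕ, monomial ζ α • F α

/-- Evaluation of an element of the vector-valued Hardy space `H²_E(𝔻)` of the disk at a
point `z ∈ 𝔻`: `g(z) = Σ_k z^k • g_k`. -/
def diskEval {E : Type*} [NormedAddCommGroup E] [InnerProductSpace ℂ E]
    (g : lp (fun _ : ℕ => E) 2) (z : ℂ) : E :=
  ∑' k : ℕ, z ^ k • g k

/-- The Hilbert multidisc `𝔻_2^∞` as a subset of `ℓ²`. -/
def hilbertMultidisc : Set (lp (fun _ : ℕ => ℂ) 2) := {ζ | ∀ n, ‖ζ n‖ < 1}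


end DCPaper

namespace DCP
open Finset

noncomputable section

abbrev MI := ℕ →₀ ℕ

/-- degree of a multi-index -/
def deg (α : MI) : ℕ := α.sum fun _ k => k

lemma deg_zero : deg 0 = 0 := Finsupp.sum_zero_index

lemma deg_single (n : ℕ) (k : ℕ) : deg (Finsupp.single n k) = k :=
  Finsupp.sum_single_index rfl

lemma deg_add (α β : MI) : deg (α + β) = deg α + deg β :=
  Finsupp.sum_add_index' (fun _ => rfl) (fun _ _ _ => rfl)

lemma deg_eq_sum {α : MI} {s : Finset ℕ} (hs : α.support ⊆ s) :
    deg α = ∑ n ∈ s, α n :=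
  Finsupp.sum_of_support_subset _ hs _ (fun _ _ => rfl)

lemma deg_eq_zero {β : MI} (h : deg β = 0) : β = 0 := by
  ext n
  by_contra hn
  have hn' : n ∈ β.support := Finsupp.mem_support_iff.2 hn
  have h1 : 1 ≤ deg β := by
    rw [deg_eq_sum (subset_refl _)]
    calc 1 ≤ β n := Nat.one_le_iff_ne_zero.2 hn
    _ ≤ ∑ m ∈ β.support, β m := Finset.single_le_sum (fun _ _ => Nat.zero_le _) hn'
  omega

lemma deg_eq_one {β : MI} (h : deg β = 1) : ∃ n, β = Finsupp.single n 1 := by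
  have hne : β.support.Nonempty := by
    rw [Finsupp.support_nonempty_iff]
    intro h0
    rw [h0, deg_zero] at h; omega
  have hcard : β.support.card ≤ 1 := by
    have h1 : β.support.card = ∑ _n ∈ β.support, 1 := by simp
    have h2 : ∑ _n ∈ β.support, 1 ≤ ∑ n ∈ β.support, β n :=
      Finset.sum_le_sum (fun n hn => Nat.one_le_iff_ne_zero.2 (Finsupp.mem_support_iff.1 hn))
    rw [deg_eq_sum (subset_refl _)] at h
    omega
  have hc : β.support.card = 1 := le_antisymm hcard (Finset.Nonempty.card_pos hne)
  obtain ⟨n, hn⟩ := Finset.card_eq_one.1 hc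
  refine ⟨n, ?_⟩
  have hβn : β n = 1 := by
    rw [deg_eq_sum (subset_refl _), hn, Finset.sum_singleton] at h; exact h
  exact Finsupp.eq_single_iff.2 ⟨by rw [hn], hβn⟩

lemma exists_decomp {α : MI} (h : α ≠ 0) :
    ∃ (n : ℕ) (α' : MI), α = α' + Finsupp.single n 1 ∧ deg α = deg α' + 1 := by
  obtain ⟨n, hn⟩ := Finsupp.support_nonempty_iff.2 h
  have hαn : 1 ≤ α n := Nat.one_le_iff_ne_zero.2 (Finsupp.mem_support_iff.1 hn)
  have heq : α = (α - Finsupp.single n 1) + Finsupp.single n 1 := by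
    ext m
    rcases eq_or_ne m n with rfl | hne
    · simp [Finsupp.tsub_apply]; omega
    · simp [Finsupp.tsub_apply, Finsupp.single_eq_of_ne' (Ne.symm hne)]
  refine ⟨n, α - Finsupp.single n 1, heq, ?_⟩
  conv_lhs => rw [heq]
  rw [deg_add, deg_single]

variable {R : Type*} [CommSemiring R]

/-- the monomial `x^α` -/
def mon (x : ℕ → R) (α : MI) : R := α.prod fun n k => x n ^ k

lemma mon_def (x : ℕ → R) (α : MI) : mon x α = ∏ n ∈ α.support, x n ^ α n := rfl

lemma mon_zero (x : ℕ → R) : mon x 0 = 1 := Finsupp.prod_zero_index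

lemma mon_eq_prod_subset {x : ℕ → R} {α : MI} {s : Finset ℕ} (hs : α.support ⊆ s) :
    mon x α = ∏ n ∈ s, x n ^ α n :=
  Finsupp.prod_of_support_subset _ hs _ (fun _ _ => pow_zero _)

lemma mon_add_index (x : ℕ → R) (α β : MI) : mon x (α + β) = mon x α * mon x β :=
  Finsupp.prod_add_index' (fun _ => pow_zero _) (fun _ _ _ => pow_add _ _ _)

lemma mon_single (x : ℕ → R) (n k : ℕ) : mon x (Finsupp.single n k) = x n ^ k :=
  Finsupp.prod_single_index (pow_zero _)

/-- binomial term -/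
def bterm (x y : ℕ → R) (α β : MI) : R :=
  ∏ n ∈ α.support, (((α n).choose (β n) : R) * x n ^ (α n - β n) * y n ^ β n)

lemma bterm_zero (x y : ℕ → R) (α : MI) : bterm x y α 0 = mon x α := by
  rw [bterm, mon_def]
  exact Finset.prod_congr rfl (fun n _ => by simp)

/-- The multi-binomial theorem over `Finset.Iic α`. -/
lemma mon_add (x y : ℕ → R) (α : MI) :
    mon (fun n => x n + y n) α = ∑ β ∈ Finset.Iic α, bterm x y α β := by
  induction α using Finsupp.induction with
  | zero =>
    have hIic : Finset.Iic (0 : MI) = {0} := by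
      ext β
      simp only [Finset.mem_Iic, Finset.mem_singleton]
      exact ⟨fun h => le_antisymm h zero_le, fun h => le_of_eq h⟩
    rw [hIic, Finset.sum_singleton, bterm_zero, mon_zero, mon_zero]
  | single_add a k φ hasupp hk ih =>
    have hφa : φ a = 0 := by
      by_contra h; exact hasupp (Finsupp.mem_support_iff.2 h)
    have hsupp : (Finsupp.single a k + φ).support = insert a φ.support := by
      rw [Finsupp.support_add_eq, Finsupp.support_single_ne_zero a hk]
      · ext n; simp [or_comm]
      · rw [Finsupp.support_single_ne_zero a hk]
        simp only [Finset.disjoint_singleton_left]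
        exact hasupp
    -- key: bterm at a shifted index
    have hkey : ∀ j, j ≤ k → ∀ β : MI, β ≤ φ →
        bterm x y (Finsupp.single a k + φ) (Finsupp.single a j + β)
        = ((k.choose j : R) * x a ^ (k - j) * y a ^ j) * bterm x y φ β := by
      intro j hj β hβ
      have hβa : β a = 0 := by
        have := (Finsupp.le_def.1 hβ) a
        omega
      rw [bterm, hsupp, Finset.prod_insert hasupp]
      congr 1
      · simp [hφa, hβa]
      · rw [bterm]
        refine Finset.prod_congr rfl (fun n hn => ?_)
        have hna : n ≠ a := fun h => hasupp (h ▸ hn)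
        simp [Finsupp.single_eq_of_ne' (Ne.symm hna)]
    -- the sum over Iic (single a k + φ) as a double sum
    have hbij : ∑ β' ∈ Finset.Iic (Finsupp.single a k + φ), bterm x y (Finsupp.single a k + φ) β'
        = ∑ p ∈ (Finset.range (k+1)) ×ˢ (Finset.Iic φ),
            ((k.choose p.1 : R) * x a ^ (k - p.1) * y a ^ p.1) * bterm x y φ p.2 := by
      refine Finset.sum_nbij' (fun β' : MI => (β' a, β' - Finsupp.single a (β' a)))
        (fun p : ℕ × MI => Finsupp.single a p.1 + p.2) ?_ ?_ ?_ ?_ ?_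
      · -- maps into product
        intro β' hβ'
        rw [Finset.mem_Iic] at hβ'
        have h1 := Finsupp.le_def.1 hβ'
        rw [Finset.mem_product]
        constructor
        · rw [Finset.mem_range]
          have h2 := h1 a
          simp [hφa] at h2
          omega
        · rw [Finset.mem_Iic, Finsupp.le_def]
          intro m
          by_cases hma : m = a
          · rw [hma]; simp [Finsupp.tsub_apply]
          · have h2 := h1 m
            simp [Finsupp.single_eq_of_ne' (Ne.symm hma), Finsupp.tsub_apply] at h2 ⊢
            exact h2
      · -- maps into Iic
        rintro ⟨j, β⟩ hp
        simp only [Finset.mem_product, Finset.mem_range, Finset.mem_Iic] at hp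
        obtain ⟨hj, hβ⟩ := hp
        rw [Finset.mem_Iic, Finsupp.le_def]
        intro m
        by_cases hma : m = a
        · rw [hma]
          have hβa : β a = 0 := by
            have h2 := Finsupp.le_def.1 hβ a
            rw [hφa] at h2; omega
          simp [hβa, hφa]; omega
        · have h2 := Finsupp.le_def.1 hβ m
          simp [Finsupp.single_eq_of_ne' (Ne.symm hma)]
          exact h2
      · -- left inverse
        intro β' _
        dsimp only
        ext m
        by_cases hma : m = a
        · rw [hma]; simp [Finsupp.tsub_apply]
        · simp [Finsupp.tsub_apply, Finsupp.single_eq_of_ne' (Ne.symm hma)]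
      · -- right inverse
        rintro ⟨j, β⟩ hp
        simp only [Finset.mem_product, Finset.mem_range, Finset.mem_Iic] at hp
        have hβa : β a = 0 := by
          have h2 := Finsupp.le_def.1 hp.2 a
          rw [hφa] at h2; omega
        dsimp only
        have h1 : ((Finsupp.single a j + β) : MI) a = j := by simp [hβa]
        rw [Prod.ext_iff]
        constructor
        · exact h1
        · ext m
          by_cases hma : m = a
          · rw [hma]; simp [hβa, Finsupp.tsub_apply]
          · simp [h1, Finsupp.tsub_apply, Finsupp.single_eq_of_ne' (Ne.symm hma)]
      · -- terms agree
        intro β' hβ'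
        rw [Finset.mem_Iic] at hβ'
        have h1 := Finsupp.le_def.1 hβ'
        have hja : β' a ≤ k := by
          have h2 := h1 a
          simp [hφa] at h2
          omega
        have hββ : β' - Finsupp.single a (β' a) ≤ φ := by
          rw [Finsupp.le_def]
          intro m
          by_cases hma : m = a
          · rw [hma]; simp [Finsupp.tsub_apply]
          · have h2 := h1 m
            simp [Finsupp.single_eq_of_ne' (Ne.symm hma), Finsupp.tsub_apply] at h2 ⊢
            exact h2
        have hrec : Finsupp.single a (β' a) + (β' - Finsupp.single a (β' a)) = β' := by
          ext m
          by_cases hma : m = a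
          · rw [hma]; simp [Finsupp.tsub_apply]
          · simp [Finsupp.tsub_apply, Finsupp.single_eq_of_ne' (Ne.symm hma)]
        dsimp only
        calc bterm x y (Finsupp.single a k + φ) β'
            = bterm x y (Finsupp.single a k + φ)
                (Finsupp.single a (β' a) + (β' - Finsupp.single a (β' a))) := by rw [hrec]
          _ = _ := hkey (β' a) hja _ hββ
    -- assemble
    rw [hbij, Finset.sum_product, mon_add_index, mon_single, ih]
    show (x a + y a) ^ k * _ = _
    rw [add_comm (x a) (y a), add_pow, Finset.sum_mul]
    refine Finset.sum_congr rfl (fun j hj => ?_)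
    rw [Finset.mul_sum]
    refine Finset.sum_congr rfl (fun β hβ => ?_)
    ring

/-! ### Stage 2: derivative term and estimates -/

variable {R : Type*} [CommSemiring R]

lemma bterm_single {x y : ℕ → R} {α : MI} {n : ℕ} (hn : n ∈ α.support) :
    bterm x y α (Finsupp.single n 1) = (α n : R) * y n * mon x (α - Finsupp.single n 1) := by
  have hαn : 1 ≤ α n := Nat.one_le_iff_ne_zero.2 (Finsupp.mem_support_iff.1 hn)
  have hsub : (α - Finsupp.single n 1).support ⊆ α.support := by
    intro m hm
    rw [Finsupp.mem_support_iff] at hm ⊢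
    intro h0
    rw [Finsupp.tsub_apply, h0] at hm
    simp at hm
  rw [bterm, mon_eq_prod_subset hsub]
  rw [← Finset.mul_prod_erase _ _ hn, ← Finset.mul_prod_erase _ _ hn]
  have h1 : ((α n).choose ((Finsupp.single n 1 : MI) n) : R) * x n ^ (α n - (Finsupp.single n 1 : MI) n)
      * y n ^ (Finsupp.single n 1 : MI) n = (α n : R) * x n ^ (α n - 1) * y n := by
    simp [Nat.choose_one_right]
  rw [h1]
  have h3 : (α - Finsupp.single n 1 : MI) n = α n - 1 := by
    rw [Finsupp.tsub_apply]; simp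
  rw [h3]
  have h2 : ∀ m ∈ α.support.erase n,
      ((α m).choose ((Finsupp.single n 1 : MI) m) : R) * x m ^ (α m - (Finsupp.single n 1 : MI) m)
        * y m ^ (Finsupp.single n 1 : MI) m = x m ^ ((α - Finsupp.single n 1 : MI) m) := by
    intro m hm
    have hmn : m ≠ n := Finset.ne_of_mem_erase hm
    rw [Finsupp.tsub_apply, Finsupp.single_apply, if_neg (Ne.symm hmn)]
    simp
  rw [Finset.prod_congr rfl h2]
  ring

/-- the first-order (derivative) term -/
def dterm (x y : ℕ → R) (α : MI) : R :=
  ∑ n ∈ α.support, (α n : R) * y n * mon x (α - Finsupp.single n 1)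

lemma filter_deg_one (α : MI) :
    (Finset.Iic α).filter (fun β => deg β = 1) = α.support.image (fun n => Finsupp.single n 1) := by
  ext β
  simp only [Finset.mem_filter, Finset.mem_Iic, Finset.mem_image]
  constructor
  · rintro ⟨hle, hdeg⟩
    obtain ⟨n, rfl⟩ := deg_eq_one hdeg
    refine ⟨n, ?_, rfl⟩
    rw [Finsupp.mem_support_iff]
    have h2 := Finsupp.le_def.1 hle n
    simp at h2
    omega
  · rintro ⟨n, hn, rfl⟩
    refine ⟨?_, deg_single n 1⟩
    rw [Finsupp.le_def]
    intro m
    rcases eq_or_ne m n with rfl | hne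
    · simpa using Nat.one_le_iff_ne_zero.2 (Finsupp.mem_support_iff.1 hn)
    · simp [Finsupp.single_eq_of_ne' (Ne.symm hne)]

lemma sum_deg_one (x y : ℕ → R) (α : MI) :
    ∑ β ∈ (Finset.Iic α).filter (fun β => deg β = 1), bterm x y α β = dterm x y α := by
  rw [filter_deg_one, Finset.sum_image (fun m _ n _ h => by
    exact (Finsupp.single_left_injective one_ne_zero) h)]
  exact Finset.sum_congr rfl (fun n hn => bterm_single hn)

lemma filter_deg_zero (α : MI) :
    (Finset.Iic α).filter (fun β => deg β = 0) = {0} := by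
  ext β
  simp only [Finset.mem_filter, Finset.mem_Iic, Finset.mem_singleton]
  constructor
  · rintro ⟨_, h⟩; exact deg_eq_zero h
  · rintro rfl; exact ⟨zero_le, deg_zero⟩

/-- The key remainder identity. -/
lemma mon_add_remainder (x y : ℕ → R) (α : MI) :
    mon (fun n => x n + y n) α = mon x α + dterm x y α
      + ∑ β ∈ (Finset.Iic α).filter (fun β => 2 ≤ deg β), bterm x y α β := by
  rw [mon_add x y α]
  rw [← Finset.sum_filter_add_sum_filter_not (Finset.Iic α) (fun β => deg β ≤ 1)]
  have h1 : (Finset.Iic α).filter (fun β => ¬ deg β ≤ 1)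
      = (Finset.Iic α).filter (fun β => 2 ≤ deg β) := by
    refine Finset.filter_congr (fun β _ => ?_)
    constructor
    · intro h; omega
    · intro h; omega
  have h2 : (Finset.Iic α).filter (fun β => deg β ≤ 1)
      = ((Finset.Iic α).filter (fun β => deg β = 0)) ∪ ((Finset.Iic α).filter (fun β => deg β = 1)) := by
    rw [← Finset.filter_or]
    refine Finset.filter_congr (fun β _ => ?_)
    constructor
    · intro h; omega
    · intro h; omega
  have hdisj : Disjoint ((Finset.Iic α).filter (fun β => deg β = 0))
      ((Finset.Iic α).filter (fun β => deg β = 1)) := by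
    rw [Finset.disjoint_filter]
    intro β _ h0 h1'
    omega
  rw [h1, h2, Finset.sum_union hdisj, filter_deg_zero, Finset.sum_singleton, bterm_zero,
    sum_deg_one]

/-- scaling of `bterm` in the second argument -/
lemma bterm_smul {x y : ℕ → R} {α β : MI} (hβ : β ≤ α) (r : R) :
    bterm x (fun n => r * y n) α β = r ^ deg β * bterm x y α β := by
  rw [bterm, bterm]
  have : ∀ n ∈ α.support,
      ((α n).choose (β n) : R) * x n ^ (α n - β n) * (r * y n) ^ β n
      = (r ^ β n) * (((α n).choose (β n) : R) * x n ^ (α n - β n) * y n ^ β n) := by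
    intro n _
    rw [mul_pow]; ring
  rw [Finset.prod_congr rfl this, Finset.prod_mul_distrib, Finset.prod_pow_eq_pow_sum]
  congr 2
  exact (deg_eq_sum (Finsupp.support_mono hβ)).symm


/-! ### Stage 2b: norm estimates -/

lemma mon_nonneg {u : ℕ → ℝ} (hu : ∀ n, 0 ≤ u n) (α : MI) : 0 ≤ mon u α :=
  Finset.prod_nonneg fun n _ => pow_nonneg (hu n) _

lemma bterm_nonneg {u v : ℕ → ℝ} (hu : ∀ n, 0 ≤ u n) (hv : ∀ n, 0 ≤ v n) (α β : MI) :
    0 ≤ bterm u v α β :=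
  Finset.prod_nonneg fun n _ =>
    mul_nonneg (mul_nonneg (Nat.cast_nonneg _) (pow_nonneg (hu n) _)) (pow_nonneg (hv n) _)

lemma mon_mono {u v : ℕ → ℝ} (hu : ∀ n, 0 ≤ u n) (huv : ∀ n, u n ≤ v n) (α : MI) :
    mon u α ≤ mon v α :=
  Finset.prod_le_prod (fun n _ => pow_nonneg (hu n) _)
    (fun n _ => pow_le_pow_left₀ (hu n) (huv n) _)

lemma norm_mon (x : ℕ → ℂ) (α : MI) : ‖mon x α‖ = mon (fun n => ‖x n‖) α := by
  rw [mon_def, mon_def, norm_prod]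
  exact Finset.prod_congr rfl fun n _ => norm_pow _ _

lemma norm_bterm (x y : ℕ → ℂ) (α β : MI) :
    ‖bterm x y α β‖ = bterm (fun n => ‖x n‖) (fun n => ‖y n‖) α β := by
  rw [bterm, bterm, norm_prod]
  refine Finset.prod_congr rfl fun n _ => ?_
  rw [norm_mul, norm_mul, norm_pow, norm_pow]
  norm_num

lemma sum_bterm_le (x y : ℕ → ℂ) (α : MI) {R : ℝ} (hR : 1 ≤ R) {k : ℕ}
    (hk : 1 ≤ k) :
    ∑ β ∈ (Finset.Iic α).filter (fun β => k ≤ deg β), ‖bterm x y α β‖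
      ≤ R⁻¹ ^ k * mon (fun n => ‖x n‖ + R * ‖y n‖) α := by
  have hR0 : 0 < R := lt_of_lt_of_le one_pos hR
  set a : ℕ → ℝ := fun n => ‖x n‖ with ha
  set b : ℕ → ℝ := fun n => ‖y n‖ with hb
  have ha0 : ∀ n, 0 ≤ a n := fun n => norm_nonneg _
  have hb0 : ∀ n, 0 ≤ b n := fun n => norm_nonneg _
  have hRb0 : ∀ n, 0 ≤ R * b n := fun n => mul_nonneg hR0.le (hb0 n)
  have hterm : ∀ β ∈ (Finset.Iic α).filter (fun β => k ≤ deg β),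
      ‖bterm x y α β‖ ≤ R⁻¹ ^ k * bterm a (fun n => R * b n) α β := by
    intro β hβ
    simp only [Finset.mem_filter, Finset.mem_Iic] at hβ
    rw [norm_bterm, ← ha, ← hb]
    rw [bterm_smul hβ.1]
    rw [← mul_assoc]
    refine le_mul_of_one_le_left (bterm_nonneg ha0 hb0 _ _) ?_
    calc (1:ℝ) = R⁻¹ ^ k * R ^ k := by
          rw [inv_pow, inv_mul_cancel₀ (ne_of_gt (pow_pos hR0 k))]
      _ ≤ R⁻¹ ^ k * R ^ deg β := by
          refine mul_le_mul_of_nonneg_left ?_ (pow_nonneg (inv_nonneg.2 hR0.le) k)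
          exact pow_le_pow_right₀ hR hβ.2
  calc ∑ β ∈ (Finset.Iic α).filter (fun β => k ≤ deg β), ‖bterm x y α β‖
      ≤ ∑ β ∈ (Finset.Iic α).filter (fun β => k ≤ deg β),
          R⁻¹ ^ k * bterm a (fun n => R * b n) α β := Finset.sum_le_sum hterm
    _ = R⁻¹ ^ k * ∑ β ∈ (Finset.Iic α).filter (fun β => k ≤ deg β),
          bterm a (fun n => R * b n) α β := by rw [Finset.mul_sum]
    _ ≤ R⁻¹ ^ k * ∑ β ∈ Finset.Iic α, bterm a (fun n => R * b n) α β := by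
        refine mul_le_mul_of_nonneg_left ?_ (pow_nonneg (inv_nonneg.2 hR0.le) k)
        refine Finset.sum_le_sum_of_subset_of_nonneg (Finset.filter_subset _ _) ?_
        intro β _ _
        exact bterm_nonneg ha0 hRb0 _ _
    _ = R⁻¹ ^ k * mon (fun n => a n + R * b n) α := by rw [← mon_add]

lemma dterm_bound (x y : ℕ → ℂ) (α : MI) {R : ℝ} (hR : 1 ≤ R) :
    ‖dterm x y α‖ ≤ R⁻¹ * mon (fun n => ‖x n‖ + R * ‖y n‖) α := by
  have h1 := sum_bterm_le x y α hR (le_refl 1)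
  rw [pow_one] at h1
  refine le_trans ?_ h1
  rw [← sum_deg_one x y α]
  have : ∀ β ∈ (Finset.Iic α).filter (fun β => deg β = 1), β ∈ (Finset.Iic α).filter (fun β => 1 ≤ deg β) := by
    intro β hβ
    simp only [Finset.mem_filter] at hβ ⊢
    exact ⟨hβ.1, le_of_eq hβ.2.symm⟩
  calc ‖∑ β ∈ (Finset.Iic α).filter (fun β => deg β = 1), bterm x y α β‖
      ≤ ∑ β ∈ (Finset.Iic α).filter (fun β => deg β = 1), ‖bterm x y α β‖ := norm_sum_le _ _
    _ ≤ ∑ β ∈ (Finset.Iic α).filter (fun β => 1 ≤ deg β), ‖bterm x y α β‖ := by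
        refine Finset.sum_le_sum_of_subset_of_nonneg ?_ (fun _ _ _ => norm_nonneg _)
        intro β hβ
        simp only [Finset.mem_filter] at hβ ⊢
        exact ⟨hβ.1, le_of_eq hβ.2.symm⟩

lemma remainder_bound (x y : ℕ → ℂ) (α : MI) {R : ℝ} (hR : 1 ≤ R) :
    ‖mon (fun n => x n + y n) α - mon x α - dterm x y α‖
      ≤ R⁻¹ ^ 2 * mon (fun n => ‖x n‖ + R * ‖y n‖) α := by
  have hid : mon (fun n => x n + y n) α - mon x α - dterm x y α
      = ∑ β ∈ (Finset.Iic α).filter (fun β => 2 ≤ deg β), bterm x y α β := by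
    rw [mon_add_remainder x y α]; ring
  rw [hid]
  refine le_trans (norm_sum_le _ _) ?_
  exact sum_bterm_le x y α hR (by norm_num)

/-! ### Stage 3: summability of products over multi-indices -/

lemma inv_one_sub_le_exp {c t : ℝ} (hc0 : 0 ≤ c) (hct : c ≤ t) (ht : t < 1) :
    (1 - c)⁻¹ ≤ Real.exp ((1 - t)⁻¹ * c) := by
  have h1 : 0 < 1 - c := by linarith
  have h2 : 0 < 1 - t := by linarith
  have h3 := Real.add_one_le_exp ((1 - t)⁻¹ * c)
  have h4 : (1 - t)⁻¹ * (1 - t) = 1 := inv_mul_cancel₀ (ne_of_gt h2)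
  have key : 1 ≤ ((1 - t)⁻¹ * c + 1) * (1 - c) := by
    have h5 : (1 - t)⁻¹ * c * (1 - c) ≥ (1 - t)⁻¹ * c * (1 - t) := by
      refine mul_le_mul_of_nonneg_left (by linarith) (mul_nonneg (inv_nonneg.2 h2.le) hc0)
    have h6 : (1 - t)⁻¹ * c * (1 - t) = c := by
      rw [mul_comm ((1-t)⁻¹) c, mul_assoc, mul_comm (1-t)⁻¹ (1-t), mul_inv_cancel₀ (ne_of_gt h2), mul_one]
    nlinarith
  have h7 : (1 - c)⁻¹ ≤ (1 - t)⁻¹ * c + 1 := by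
    rw [inv_eq_one_div, div_le_iff₀ h1]
    linarith
  linarith

lemma geom_partial_le {c t : ℝ} (hc0 : 0 ≤ c) (hct : c ≤ t) (ht : t < 1) (m : ℕ) :
    ∑ k ∈ Finset.range m, c ^ k ≤ (1 - c)⁻¹ := by
  have hc1 : c < 1 := lt_of_le_of_lt hct ht
  have h := Summable.sum_le_tsum (Finset.range m) (fun k _ => pow_nonneg hc0 k)
    (summable_geometric_of_lt_one hc0 hc1)
  rwa [tsum_geometric_of_lt_one hc0 hc1] at h

set_option maxHeartbeats 1000000 in
/-- Master summability lemma for products over multi-indices. -/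
lemma summable_mon {c : ℕ → ℝ} {t : ℝ} (hc0 : ∀ n, 0 ≤ c n) (hct : ∀ n, c n ≤ t)
    (ht : t < 1) (hs : Summable c) :
    Summable (fun α : MI => mon c α) ∧
      ∑' α : MI, mon c α ≤ Real.exp ((1 - t)⁻¹ * ∑' n, c n) := by
  have hbound : ∀ s : Finset MI, ∑ α ∈ s, mon c α ≤ Real.exp ((1 - t)⁻¹ * ∑' n, c n) := by
    intro s
    set N := (s.sup fun α => α.support.sup _root_.id) + 1 with hN
    set M := s.sup deg with hM
    have hsupp : ∀ α ∈ s, α.support ⊆ Finset.range N := by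
      intro α hα n hn
      rw [Finset.mem_range]
      have h1 : _root_.id n ≤ α.support.sup _root_.id := Finset.le_sup hn
      have h2 : α.support.sup _root_.id ≤ s.sup (fun α => α.support.sup _root_.id) :=
        Finset.le_sup (f := fun α => α.support.sup _root_.id) hα
      simp only [id_eq] at h1
      omega
    have hval : ∀ α ∈ s, ∀ n, α n ∈ Finset.range (M + 1) := by
      intro α hα n
      rw [Finset.mem_range]
      by_cases hn : n ∈ α.support
      · have h1 : α n ≤ deg α := by
          rw [deg_eq_sum (subset_refl _)]
          exact Finset.single_le_sum (f := fun m => α m) (fun _ _ => Nat.zero_le _) hn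
        have h2 : deg α ≤ M := Finset.le_sup hα
        omega
      · rw [Finsupp.notMem_support_iff.1 hn]
        omega
    -- embed into the box
    have hstep1 : ∑ α ∈ s, mon c α = ∑ α ∈ s, ∏ n ∈ Finset.range N, c n ^ α n :=
      Finset.sum_congr rfl (fun α hα => mon_eq_prod_subset (hsupp α hα))
    have hinj : Set.InjOn (fun (α : MI) => fun (n : ℕ) (_ : n ∈ Finset.range N) => α n) s := by
      intro α hα α' hα' h
      ext n
      by_cases hn : n ∈ Finset.range N
      · exact congrFun (congrFun h n) hn
      · have h1 : α n = 0 := by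
          rw [← Finsupp.notMem_support_iff]
          exact fun hmem => hn (hsupp α hα hmem)
        have h2 : α' n = 0 := by
          rw [← Finsupp.notMem_support_iff]
          exact fun hmem => hn (hsupp α' hα' hmem)
        rw [h1, h2]
    have himg : ∑ p ∈ s.image (fun (α : MI) => fun (n : ℕ) (_ : n ∈ Finset.range N) => α n),
          ∏ x ∈ (Finset.range N).attach, c x.1 ^ p x.1 x.2
        = ∑ α ∈ s, ∏ x ∈ (Finset.range N).attach, c x.1 ^ α x.1 := by
      rw [Finset.sum_image (fun α hα α' hα' h => hinj hα hα' h)]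
    have hattach : ∀ α : MI, ∏ x ∈ (Finset.range N).attach, c x.1 ^ α x.1
        = ∏ n ∈ Finset.range N, c n ^ α n := fun α => Finset.prod_attach (Finset.range N) (fun n => c n ^ α n)
    have hsub : s.image (fun (α : MI) => fun (n : ℕ) (_ : n ∈ Finset.range N) => α n)
        ⊆ (Finset.range N).pi (fun _ => Finset.range (M + 1)) := by
      intro p hp
      rw [Finset.mem_image] at hp
      obtain ⟨α, hα, rfl⟩ := hp
      rw [Finset.mem_pi]
      intro n _
      exact hval α hα n
    have hstep2 : ∑ α ∈ s, ∏ n ∈ Finset.range N, c n ^ α n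
        ≤ ∑ p ∈ (Finset.range N).pi (fun _ => Finset.range (M + 1)),
            ∏ x ∈ (Finset.range N).attach, c x.1 ^ p x.1 x.2 := by
      rw [← Finset.sum_congr rfl (fun α (hα : α ∈ s) => (hattach α)), ← himg]
      refine Finset.sum_le_sum_of_subset_of_nonneg hsub ?_
      intro p _ _
      exact Finset.prod_nonneg (fun x _ => pow_nonneg (hc0 x.1) _)
    have hstep3 : ∑ p ∈ (Finset.range N).pi (fun _ => Finset.range (M + 1)),
            ∏ x ∈ (Finset.range N).attach, c x.1 ^ p x.1 x.2
        = ∏ n ∈ Finset.range N, ∑ k ∈ Finset.range (M + 1), c n ^ k :=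
      (Finset.prod_sum (Finset.range N) (fun _ => Finset.range (M + 1))
        (fun n k => c n ^ k)).symm
    have hstep4 : ∏ n ∈ Finset.range N, ∑ k ∈ Finset.range (M + 1), c n ^ k
        ≤ ∏ n ∈ Finset.range N, Real.exp ((1 - t)⁻¹ * c n) := by
      refine Finset.prod_le_prod ?_ ?_
      · intro n _
        exact Finset.sum_nonneg (fun k _ => pow_nonneg (hc0 n) k)
      · intro n _
        exact le_trans (geom_partial_le (hc0 n) (hct n) ht (M + 1))
          (inv_one_sub_le_exp (hc0 n) (hct n) ht)
    have hstep5 : ∏ n ∈ Finset.range N, Real.exp ((1 - t)⁻¹ * c n)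
        ≤ Real.exp ((1 - t)⁻¹ * ∑' n, c n) := by
      rw [← Real.exp_sum]
      rw [Real.exp_le_exp]
      rw [← Finset.mul_sum]
      refine mul_le_mul_of_nonneg_left ?_ (inv_nonneg.2 (by linarith))
      exact Summable.sum_le_tsum _ (fun n _ => hc0 n) hs
    calc ∑ α ∈ s, mon c α = ∑ α ∈ s, ∏ n ∈ Finset.range N, c n ^ α n := hstep1
      _ ≤ _ := hstep2
      _ = _ := hstep3
      _ ≤ _ := hstep4
      _ ≤ _ := hstep5
  have hsummable : Summable (fun α : MI => mon c α) :=
    summable_of_sum_le (fun α => mon_nonneg hc0 α) hbound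
  exact ⟨hsummable, Summable.tsum_le_of_sum_le hsummable hbound⟩


/-! ### Stage 4a: lp helpers (p = 2) -/

lemma rpow_toReal_two (x : ℝ) : x ^ ((2:ENNReal).toReal) = x ^ (2:ℕ) := by
  have h2 : ((2:ENNReal)).toReal = ((2:ℕ):ℝ) := by norm_num
  rw [h2, Real.rpow_natCast]

variable {ι : Type*} {E : Type*} [NormedAddCommGroup E]

lemma lp2_summable_sq (f : lp (fun _ : ι => E) 2) : Summable (fun i => ‖f i‖ ^ (2:ℕ)) := by
  have h := (lp.memℓp f).summable (p := 2) (by norm_num)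
  convert h using 2 with i
  exact (rpow_toReal_two _).symm

lemma memℓp_two_of_sq (f : ι → E) (h : Summable (fun i => ‖f i‖ ^ (2:ℕ))) :
    Memℓp f 2 := by
  refine memℓp_gen ?_
  convert h using 2 with i
  exact rpow_toReal_two _

lemma lp2_norm_sq (f : lp (fun _ : ι => E) 2) : ‖f‖ ^ (2:ℕ) = ∑' i, ‖f i‖ ^ (2:ℕ) := by
  have h := lp.norm_rpow_eq_tsum (p := 2) (by norm_num) f
  rw [rpow_toReal_two] at h
  rw [h]
  congr 1
  ext i
  exact rpow_toReal_two _

lemma lp2_norm_le {f : lp (fun _ : ι => E) 2} {B : ℝ} (hB : 0 ≤ B)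
    (h : ∑' i, ‖f i‖ ^ (2:ℕ) ≤ B ^ (2:ℕ)) : ‖f‖ ≤ B := by
  have h1 := lp2_norm_sq f
  nlinarith [norm_nonneg f]

lemma lp2_sum_sq_le (f : lp (fun _ : ι => E) 2) (s : Finset ι) :
    ∑ i ∈ s, ‖f i‖ ^ (2:ℕ) ≤ ‖f‖ ^ (2:ℕ) := by
  rw [lp2_norm_sq f]
  exact Summable.sum_le_tsum s (fun i _ => by positivity) (lp2_summable_sq f)


/-! ### Stage 4b: the kernel map and its differentiability -/

abbrev L2 := lp (fun _ : ℕ => ℂ) 2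
abbrev H2C := lp (fun _ : MI => ℂ) 2

lemma summable_mon_sq {u : ℕ → ℝ} {t : ℝ} (hu0 : ∀ n, 0 ≤ u n) (hut : ∀ n, u n ≤ t)
    (ht0 : 0 ≤ t) (ht : t < 1) (hsq : Summable (fun n => u n ^ (2:ℕ))) :
    Summable (fun α : MI => mon u α ^ (2:ℕ)) ∧
      ∑' α : MI, mon u α ^ (2:ℕ) ≤ Real.exp ((1 - t^2)⁻¹ * ∑' n, u n ^ (2:ℕ)) := by
  have hmon : ∀ α, mon u α ^ (2:ℕ) = mon (fun n => u n ^ (2:ℕ)) α := by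
    intro α
    rw [mon_def, mon_def, ← Finset.prod_pow]
    exact Finset.prod_congr rfl fun n _ => by rw [← pow_mul, ← pow_mul, mul_comm 2 (α n)]
  have hmain := summable_mon (c := fun n => u n ^ (2:ℕ)) (t := t^2)
    (fun n => by positivity)
    (fun n => pow_le_pow_left₀ (hu0 n) (hut n) 2)
    (by nlinarith)
    hsq
  constructor
  · exact hmain.1.congr (fun α => (hmon α).symm)
  · rw [tsum_congr hmon]
    exact hmain.2

/-- Uniform bound constant. -/
def MM (A s0 : ℝ) : ℝ :=
  Real.exp ((1 - ((1+s0)/2)^2)⁻¹ * (2*A + 2*((1-s0)/2)^2))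

lemma MM_pos (A s0 : ℝ) : 0 < MM A s0 := Real.exp_pos _

lemma kern_sq_bound (ζ0 : L2) {s0 : ℝ} (h00 : 0 ≤ s0) (h01 : s0 < 1)
    (hle : ∀ n, ‖ζ0 n‖ ≤ s0)
    (h : L2) {R : ℝ} (hR : 1 ≤ R) (hRh : R * ‖h‖ ≤ (1 - s0)/2) :
    Summable (fun α : MI => mon (fun n => ‖ζ0 n‖ + R * ‖h n‖) α ^ (2:ℕ)) ∧
      ∑' α : MI, mon (fun n => ‖ζ0 n‖ + R * ‖h n‖) α ^ (2:ℕ) ≤ MM (‖ζ0‖^(2:ℕ)) s0 := by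
  have hR0 : 0 < R := lt_of_lt_of_le one_pos hR
  set δ : ℝ := (1 - s0)/2 with hδ
  set t : ℝ := (1 + s0)/2 with ht
  have hδ0 : 0 < δ := by rw [hδ]; linarith
  have ht0 : 0 ≤ t := by rw [ht]; linarith
  have ht1 : t < 1 := by rw [ht]; linarith
  set u : ℕ → ℝ := fun n => ‖ζ0 n‖ + R * ‖h n‖ with hu
  have hu0 : ∀ n, 0 ≤ u n := fun n => by positivity
  have hut : ∀ n, u n ≤ t := by
    intro n
    have h1 : ‖h n‖ ≤ ‖h‖ := lp.norm_apply_le_norm (by norm_num) h n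
    have h2 : R * ‖h n‖ ≤ R * ‖h‖ := mul_le_mul_of_nonneg_left h1 hR0.le
    have := hle n
    rw [hu, ht]; dsimp only
    rw [hδ] at hRh
    linarith
  -- summability of u^2
  have hmaj : ∀ n, u n ^ (2:ℕ) ≤ 2 * ‖ζ0 n‖^(2:ℕ) + 2 * (R * ‖h n‖)^(2:ℕ) := by
    intro n
    rw [hu]; dsimp only
    nlinarith [sq_nonneg (‖ζ0 n‖ - R * ‖h n‖), norm_nonneg (ζ0 n), norm_nonneg (h n), hR0.le]
  have hsummaj : Summable (fun n => 2 * ‖ζ0 n‖^(2:ℕ) + 2 * (R * ‖h n‖)^(2:ℕ)) := by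
    apply Summable.add
    · exact (lp2_summable_sq ζ0).mul_left 2
    · have h6 : Summable (fun n => (R^(2:ℕ)) * ‖h n‖^(2:ℕ)) := (lp2_summable_sq h).mul_left _
      exact ((h6.congr (fun n => (mul_pow R ‖h n‖ 2).symm)).mul_left 2)
  have hsq : Summable (fun n => u n ^ (2:ℕ)) :=
    Summable.of_nonneg_of_le (fun n => by positivity) hmaj hsummaj
  have hmain := summable_mon_sq hu0 hut ht0 ht1 hsq
  refine ⟨hmain.1, le_trans hmain.2 ?_⟩
  rw [MM]
  rw [Real.exp_le_exp]
  have hinv : (0:ℝ) ≤ (1 - t^2)⁻¹ := by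
    refine inv_nonneg.2 ?_
    nlinarith
  have htsum : ∑' n, u n ^ (2:ℕ) ≤ 2 * ‖ζ0‖^(2:ℕ) + 2 * δ^(2:ℕ) := by
    have h1 : ∑' n, u n ^ (2:ℕ) ≤ ∑' n, (2 * ‖ζ0 n‖^(2:ℕ) + 2 * (R * ‖h n‖)^(2:ℕ)) :=
      Summable.tsum_le_tsum hmaj hsq hsummaj
    have h2 : ∑' n, (2 * ‖ζ0 n‖^(2:ℕ) + 2 * (R * ‖h n‖)^(2:ℕ))
        = 2 * (∑' n, ‖ζ0 n‖^(2:ℕ)) + 2 * (R^(2:ℕ) * ∑' n, ‖h n‖^(2:ℕ)) := by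
      rw [Summable.tsum_add ((lp2_summable_sq ζ0).mul_left 2)]
      · rw [tsum_mul_left, tsum_mul_left]
        congr 2
        rw [← tsum_mul_left]
        exact tsum_congr (fun n => by rw [mul_pow])
      · have : Summable (fun n => (R^(2:ℕ)) * ‖h n‖^(2:ℕ)) := (lp2_summable_sq h).mul_left _
        refine (this.congr (fun n => by rw [mul_pow])).mul_left 2
    have h3 : R^(2:ℕ) * ∑' n, ‖h n‖^(2:ℕ) = (R * ‖h‖)^(2:ℕ) := by
      rw [← lp2_norm_sq h, mul_pow]
    have h4 : (R * ‖h‖)^(2:ℕ) ≤ δ^(2:ℕ) := by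
      refine pow_le_pow_left₀ (by positivity) hRh 2
    rw [h2, h3] at h1
    have h5 : ∑' n, ‖ζ0 n‖^(2:ℕ) = ‖ζ0‖^(2:ℕ) := (lp2_norm_sq ζ0).symm
    rw [h5] at h1
    linarith
  have : (1 - t ^ 2)⁻¹ * ∑' (n : ℕ), u n ^ 2 ≤ (1 - t^2)⁻¹ * (2 * ‖ζ0‖^(2:ℕ) + 2*δ^(2:ℕ)) :=
    mul_le_mul_of_nonneg_left htsum hinv
  calc (1 - t ^ 2)⁻¹ * ∑' (n : ℕ), u n ^ 2
      ≤ (1 - t^2)⁻¹ * (2 * ‖ζ0‖^(2:ℕ) + 2*δ^(2:ℕ)) := this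
    _ = (1 - ((1+s0)/2) ^ 2)⁻¹ * (2 * ‖ζ0‖ ^ 2 + 2 * ((1-s0)/2) ^ 2) := by rw [ht, hδ]

/-- the scalar kernel function -/
def kernFun (ζ : L2) : MI → ℂ := fun α => mon (fun n => ζ n) α

lemma kernFun_norm (ζ : L2) (α : MI) : ‖kernFun ζ α‖ = mon (fun n => ‖ζ n‖) α :=
  norm_mon _ _

lemma exists_bound (ζ : L2) (hζ : ∀ n, ‖ζ n‖ < 1) :
    ∃ s0 : ℝ, 0 ≤ s0 ∧ s0 < 1 ∧ ∀ n, ‖ζ n‖ ≤ s0 := by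
  have hsum : Summable (fun n => ‖ζ n‖ ^ (2:ℕ)) := lp2_summable_sq ζ
  have htend : Filter.Tendsto (fun n => ‖ζ n‖ ^ (2:ℕ)) Filter.atTop (nhds 0) :=
    hsum.tendsto_atTop_zero
  have hev : ∀ᶠ n in Filter.atTop, ‖ζ n‖ ^ (2:ℕ) < (1/4 : ℝ) :=
    htend.eventually_lt_const (by norm_num)
  obtain ⟨N, hN⟩ := Filter.eventually_atTop.1 hev
  set S : NNReal := (Finset.range (N+1)).sup (fun n => ‖ζ n‖₊) with hS
  refine ⟨max (1/2 : ℝ) (S:ℝ), le_trans (by norm_num) (le_max_left _ _), ?_, ?_⟩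
  · rw [max_lt_iff]
    refine ⟨by norm_num, ?_⟩
    have hSlt : S < 1 := by
      rw [hS, Finset.sup_lt_iff (by norm_num : (⊥:NNReal) < 1)]
      intro n _
      have := hζ n
      rw [← NNReal.coe_lt_one]
      simpa using this
    exact_mod_cast hSlt
  · intro n
    by_cases hn : n ≤ N
    · refine le_trans ?_ (le_max_right _ _)
      have h1 : ‖ζ n‖₊ ≤ S := Finset.le_sup (f := fun n => ‖ζ n‖₊) (Finset.mem_range.2 (by omega))
      exact_mod_cast h1
    · have h2 := hN n (by omega)
      have h3 : ‖ζ n‖ ≤ 1/2 := by nlinarith [norm_nonneg (ζ n)]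
      exact le_trans h3 (le_max_left _ _)

lemma kern_memℓp (ζ : L2) (hζ : ∀ n, ‖ζ n‖ < 1) : Memℓp (kernFun ζ) 2 := by
  obtain ⟨s0, h00, h01, hle⟩ := exists_bound ζ hζ
  have hb := kern_sq_bound ζ h00 h01 hle 0 (le_refl 1) (by simp; linarith)
  refine memℓp_two_of_sq _ ?_
  refine hb.1.congr (fun α => ?_)
  rw [kernFun_norm]
  congr 1
  refine congrArg (fun u => mon u α) ?_
  funext n
  simp [lp.coeFn_zero]

open scoped Classical in
/-- the kernel as an element of `H2C` -/
def kern (ζ : L2) : H2C :=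
  if h : Memℓp (kernFun ζ) 2 then ⟨kernFun ζ, h⟩ else 0

lemma kern_apply (ζ : L2) (hζ : ∀ n, ‖ζ n‖ < 1) (α : MI) :
    kern ζ α = kernFun ζ α := by
  rw [kern, dif_pos (kern_memℓp ζ hζ)]

/-- the derivative coefficient function -/
def dFun (ζ h : L2) : MI → ℂ := fun α => dterm (fun n => ζ n) (fun n => h n) α

lemma dFun_add (ζ h h' : L2) : dFun ζ (h + h') = dFun ζ h + dFun ζ h' := by
  funext α
  simp only [dFun, dterm, Pi.add_apply]
  rw [← Finset.sum_add_distrib]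
  refine Finset.sum_congr rfl (fun n _ => ?_)
  have : (↑(h + h') : ℕ → ℂ) n = h n + h' n := by rw [lp.coeFn_add]; rfl
  rw [this]
  ring

lemma dFun_smul (ζ : L2) (c : ℂ) (h : L2) : dFun ζ (c • h) = c • dFun ζ h := by
  funext α
  simp only [dFun, dterm, Pi.smul_apply, smul_eq_mul, Finset.mul_sum]
  refine Finset.sum_congr rfl (fun n _ => ?_)
  have : (↑(c • h) : ℕ → ℂ) n = c * h n := by rw [lp.coeFn_smul]; rfl
  rw [this]
  ring


lemma dFun_zero (ζ : L2) : dFun ζ 0 = 0 := by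
  funext α
  simp only [dFun, dterm, Pi.zero_apply]
  refine Finset.sum_eq_zero (fun n _ => ?_)
  have h0 : ((0:L2) : ℕ → ℂ) n = 0 := by rw [lp.coeFn_zero]; rfl
  rw [h0]; ring

lemma dFun_memℓp_small (ζ0 : L2) {s0 : ℝ} (h00 : 0 ≤ s0) (h01 : s0 < 1)
    (hle : ∀ n, ‖ζ0 n‖ ≤ s0) (h : L2) (hh : ‖h‖ ≤ (1 - s0)/2) :
    Memℓp (dFun ζ0 h) 2 ∧
      ∑' α : MI, ‖dFun ζ0 h α‖^(2:ℕ) ≤ MM (‖ζ0‖^(2:ℕ)) s0 := by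
  have hb := kern_sq_bound ζ0 h00 h01 hle h (le_refl 1) (by rwa [one_mul])
  have hest : ∀ α, ‖dFun ζ0 h α‖ ≤ mon (fun n => ‖ζ0 n‖ + 1 * ‖h n‖) α := by
    intro α
    have h1 := dterm_bound (fun n => ζ0 n) (fun n => h n) α (le_refl 1)
    rwa [inv_one, one_mul] at h1
  have hsq : ∀ α, ‖dFun ζ0 h α‖^(2:ℕ) ≤ mon (fun n => ‖ζ0 n‖ + 1 * ‖h n‖) α ^ (2:ℕ) :=
    fun α => pow_le_pow_left₀ (norm_nonneg _) (hest α) 2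
  have hsum : Summable (fun α => ‖dFun ζ0 h α‖^(2:ℕ)) :=
    Summable.of_nonneg_of_le (fun α => by positivity) hsq hb.1
  exact ⟨memℓp_two_of_sq _ hsum, le_trans (Summable.tsum_le_tsum hsq hsum hb.1) hb.2⟩

lemma dFun_memℓp (ζ0 : L2) {s0 : ℝ} (h00 : 0 ≤ s0) (h01 : s0 < 1)
    (hle : ∀ n, ‖ζ0 n‖ ≤ s0) (h : L2) : Memℓp (dFun ζ0 h) 2 := by
  have hδ0 : (0:ℝ) < (1 - s0)/2 := by linarith
  rcases eq_or_ne h 0 with rfl | hne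
  · rw [dFun_zero]; exact zero_memℓp
  · have hn0 : 0 < ‖h‖ := norm_pos_iff.2 hne
    set c : ℂ := (((1 - s0)/2 / ‖h‖ : ℝ) : ℂ) with hc
    have hcr : (0:ℝ) < (1 - s0)/2 / ‖h‖ := by positivity
    have hc0 : c ≠ 0 := by
      rw [hc]
      exact_mod_cast ne_of_gt hcr
    have h1 : dFun ζ0 h = c⁻¹ • dFun ζ0 (c • h) := by
      rw [dFun_smul, smul_smul, inv_mul_cancel₀ hc0, one_smul]
    rw [h1]
    refine Memℓp.const_smul ?_ _
    refine (dFun_memℓp_small ζ0 h00 h01 hle (c • h) ?_).1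
    rw [norm_smul, hc]
    have : ‖(((1 - s0)/2 / ‖h‖ : ℝ) : ℂ)‖ = (1 - s0)/2 / ‖h‖ := by
      rw [Complex.norm_real]
      exact Real.norm_of_nonneg hcr.le
    rw [this, div_mul_cancel₀ _ (ne_of_gt hn0)]

lemma exists_dCLM (ζ0 : L2) {s0 : ℝ} (h00 : 0 ≤ s0) (h01 : s0 < 1)
    (hle : ∀ n, ‖ζ0 n‖ ≤ s0) :
    ∃ D : L2 →L[ℂ] H2C, ∀ h : L2, ∀ α : MI, D h α = dFun ζ0 h α := by
  have hδ0 : (0:ℝ) < (1 - s0)/2 := by linarith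
  set CM := Real.sqrt (MM (‖ζ0‖^(2:ℕ)) s0) with hCM
  have hCM0 : 0 < CM := Real.sqrt_pos.2 (MM_pos _ _)
  let L : L2 →ₗ[ℂ] H2C :=
    { toFun := fun h => (⟨dFun ζ0 h, dFun_memℓp ζ0 h00 h01 hle h⟩ : H2C)
      map_add' := fun h h' => Subtype.ext (dFun_add ζ0 h h')
      map_smul' := fun c h => Subtype.ext (dFun_smul ζ0 c h) }
  have hLapply : ∀ h α, (L h) α = dFun ζ0 h α := fun h α => rfl
  have hsmallbound : ∀ h : L2, ‖h‖ ≤ (1 - s0)/2 → ‖L h‖ ≤ CM := by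
    intro h hh
    refine lp2_norm_le hCM0.le ?_
    rw [hCM, Real.sq_sqrt (MM_pos _ _).le]
    exact (dFun_memℓp_small ζ0 h00 h01 hle h hh).2
  have hbound : ∀ h : L2, ‖L h‖ ≤ (CM / ((1 - s0)/2)) * ‖h‖ := by
    intro h
    rcases eq_or_ne h 0 with rfl | hne
    · rw [map_zero, norm_zero, norm_zero, mul_zero]
    · have hn0 : 0 < ‖h‖ := norm_pos_iff.2 hne
      set c : ℂ := (((1 - s0)/2 / ‖h‖ : ℝ) : ℂ) with hc
      have hcr : (0:ℝ) < (1 - s0)/2 / ‖h‖ := by positivity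
      have hcnorm : ‖c‖ = (1 - s0)/2 / ‖h‖ := by
        rw [hc, Complex.norm_real]
        exact Real.norm_of_nonneg hcr.le
      have hc0 : c ≠ 0 := by
        rw [hc]; exact_mod_cast ne_of_gt hcr
      have hch : ‖c • h‖ = (1 - s0)/2 := by
        rw [norm_smul, hcnorm, div_mul_cancel₀ _ (ne_of_gt hn0)]
      have h1 : L h = c⁻¹ • L (c • h) := by
        rw [map_smul, smul_smul, inv_mul_cancel₀ hc0, one_smul]
      rw [h1, norm_smul, norm_inv, hcnorm]
      have h2 := hsmallbound (c • h) (le_of_eq hch)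
      rw [div_eq_mul_inv, mul_inv, inv_inv]
      calc ((1 - s0)/2)⁻¹ * ‖h‖ * ‖L (c • h)‖ ≤ ((1 - s0)/2)⁻¹ * ‖h‖ * CM := by
            refine mul_le_mul_of_nonneg_left h2 (by positivity)
        _ = CM / ((1 - s0)/2) * ‖h‖ := by ring
  exact ⟨L.mkContinuous _ hbound, fun h α => rfl⟩

lemma kern_differentiableAt (ζ0 : L2) (hζ0 : ∀ n, ‖ζ0 n‖ < 1) :
    DifferentiableAt ℂ kern ζ0 := by
  obtain ⟨s0, h00, h01, hle⟩ := exists_bound ζ0 hζ0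
  obtain ⟨D, hD⟩ := exists_dCLM ζ0 h00 h01 hle
  refine ⟨D, ?_⟩
  rw [hasFDerivAt_iff_isLittleO_nhds_zero, Asymptotics.isLittleO_iff]
  intro ε hε
  set δ : ℝ := (1 - s0)/2 with hδdef
  have hδ0 : 0 < δ := by rw [hδdef]; linarith
  set CM := Real.sqrt (MM (‖ζ0‖^(2:ℕ)) s0) with hCM
  have hCM0 : 0 < CM := Real.sqrt_pos.2 (MM_pos _ _)
  set r : ℝ := min δ (ε * δ^2 / CM) with hr
  have hr0 : 0 < r := by
    rw [hr]
    exact lt_min hδ0 (by positivity)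
  have hmem : Metric.ball (0:L2) r ∈ nhds (0:L2) := Metric.ball_mem_nhds _ hr0
  refine Filter.eventually_of_mem hmem ?_
  intro h hh
  rw [mem_ball_zero_iff] at hh
  rcases eq_or_ne h 0 with rfl | hne
  · simp
  · have hn0 : 0 < ‖h‖ := norm_pos_iff.2 hne
    have hhδ : ‖h‖ ≤ δ := le_of_lt (lt_of_lt_of_le hh (by rw [hr]; exact min_le_left _ _))
    have hhε : ‖h‖ < ε * δ^2 / CM := lt_of_lt_of_le hh (by rw [hr]; exact min_le_right _ _)
    set R : ℝ := δ / ‖h‖ with hR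
    have hR1 : 1 ≤ R := by
      rw [hR, le_div_iff₀ hn0, one_mul]; exact hhδ
    have hRh : R * ‖h‖ = δ := by
      rw [hR, div_mul_cancel₀ _ (ne_of_gt hn0)]
    have hb := kern_sq_bound ζ0 h00 h01 hle h hR1 (le_of_eq (by rw [hRh, hδdef]))
    -- ζ0 + h is in the multidisc
    have hmd : ∀ n, ‖(ζ0 + h) n‖ < 1 := by
      intro n
      have h1 : ((ζ0 + h : L2) : ℕ → ℂ) n = ζ0 n + h n := by rw [lp.coeFn_add]; rfl
      rw [h1]
      have h2 : ‖h n‖ ≤ ‖h‖ := lp.norm_apply_le_norm (by norm_num) h n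
      calc ‖ζ0 n + h n‖ ≤ ‖ζ0 n‖ + ‖h n‖ := norm_add_le _ _
        _ ≤ s0 + δ := add_le_add (hle n) (le_trans h2 hhδ)
        _ < 1 := by rw [hδdef]; linarith
    -- coordinates of the remainder
    set F : H2C := kern (ζ0 + h) - kern ζ0 - D h with hF
    have hFα : ∀ α, F α = mon (fun n => ζ0 n + h n) α - mon (fun n => ζ0 n) α
        - dterm (fun n => ζ0 n) (fun n => h n) α := by
      intro α
      rw [hF]
      have e1 : ((kern (ζ0 + h) - kern ζ0 - D h : H2C) : MI → ℂ) α
          = kern (ζ0 + h) α - kern ζ0 α - D h α := by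
        rw [lp.coeFn_sub, lp.coeFn_sub]; rfl
      rw [e1, kern_apply _ hmd, kern_apply _ hζ0, hD h α]
      have e2 : kernFun (ζ0 + h) α = mon (fun n => ζ0 n + h n) α :=
        congrArg (fun u => mon u α) (funext fun n => by rw [lp.coeFn_add]; rfl)
      rw [e2]
      rfl
    have hest : ∀ α, ‖F α‖ ≤ R⁻¹^2 * mon (fun n => ‖ζ0 n‖ + R * ‖h n‖) α := by
      intro α
      rw [hFα α]
      exact remainder_bound (fun n => ζ0 n) (fun n => h n) α hR1
    have hFsq : ∀ α, ‖F α‖^(2:ℕ) ≤ (R⁻¹^2)^(2:ℕ) * mon (fun n => ‖ζ0 n‖ + R * ‖h n‖) α ^ (2:ℕ) := by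
      intro α
      rw [← mul_pow]
      exact pow_le_pow_left₀ (norm_nonneg _) (hest α) 2
    have htsum : ∑' α : MI, ‖F α‖^(2:ℕ) ≤ (R⁻¹^2)^(2:ℕ) * MM (‖ζ0‖^(2:ℕ)) s0 := by
      calc ∑' α : MI, ‖F α‖^(2:ℕ)
          ≤ ∑' α : MI, (R⁻¹^2)^(2:ℕ) * mon (fun n => ‖ζ0 n‖ + R * ‖h n‖) α ^ (2:ℕ) :=
            Summable.tsum_le_tsum hFsq (lp2_summable_sq F) (hb.1.mul_left _)
        _ = (R⁻¹^2)^(2:ℕ) * ∑' α : MI, mon (fun n => ‖ζ0 n‖ + R * ‖h n‖) α ^ (2:ℕ) :=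
            tsum_mul_left
        _ ≤ (R⁻¹^2)^(2:ℕ) * MM (‖ζ0‖^(2:ℕ)) s0 :=
            mul_le_mul_of_nonneg_left hb.2 (by positivity)
    have hFnorm : ‖F‖ ≤ R⁻¹^2 * CM := by
      refine lp2_norm_le (by positivity) ?_
      rw [mul_pow, hCM, Real.sq_sqrt (MM_pos _ _).le]
      exact htsum
    have hfinal : R⁻¹^2 * CM ≤ ε * ‖h‖ := by
      have hRinv : R⁻¹ = ‖h‖ / δ := by
        rw [hR, inv_div]
      rw [hRinv, div_pow]
      rw [div_mul_eq_mul_div, div_le_iff₀ (by positivity)]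
      have h2 : ‖h‖ * CM ≤ (ε * δ^2 / CM) * CM := by
        refine mul_le_mul_of_nonneg_right hhε.le hCM0.le
      have h3 : (ε * δ^2 / CM) * CM = ε * δ^2 := by
        field_simp
      calc ‖h‖^2 * CM = ‖h‖ * (‖h‖ * CM) := by ring
        _ ≤ ‖h‖ * (ε * δ^2) := by
            refine mul_le_mul_of_nonneg_left ?_ hn0.le
            rw [← h3]; exact h2
        _ = ε * ‖h‖ * δ^2 := by ring
    exact le_trans hFnorm hfinal


/-! ### Stage 5a: pairing -/

section Pairing

variable {E : Type*} [NormedAddCommGroup E] [InnerProductSpace ℂ E] [CompleteSpace E]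

lemma summable_pair (k : H2C) (H : lp (fun _ : MI => E) 2) :
    Summable (fun α => ‖k α‖ * ‖H α‖) := by
  refine Summable.of_nonneg_of_le (fun α => by positivity) (fun α => ?_)
    (((lp2_summable_sq k).add (lp2_summable_sq H)).div_const 2)
  have := sq_nonneg (‖k α‖ - ‖H α‖)
  nlinarith [norm_nonneg (k α), norm_nonneg (H α)]

lemma summable_smul_pair (k : H2C) (H : lp (fun _ : MI => E) 2) :
    Summable (fun α => k α • H α) := by
  refine Summable.of_norm ?_
  refine (summable_pair k H).congr (fun α => ?_)
  rw [norm_smul]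

lemma tsum_pair_le (k : H2C) (H : lp (fun _ : MI => E) 2) :
    ∑' α, ‖k α‖ * ‖H α‖ ≤ ‖k‖ * ‖H‖ := by
  refine Summable.tsum_le_of_sum_le (summable_pair k H) (fun s => ?_)
  have hcs := Finset.sum_mul_sq_le_sq_mul_sq s (fun α => ‖k α‖) (fun α => ‖H α‖)
  have h1 := lp2_sum_sq_le k s
  have h2 := lp2_sum_sq_le H s
  have h3 : (0:ℝ) ≤ ∑ α ∈ s, ‖k α‖ * ‖H α‖ :=
    Finset.sum_nonneg (fun α _ => by positivity)
  have h4 : (0:ℝ) ≤ ∑ α ∈ s, ‖k α‖^(2:ℕ) :=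
    Finset.sum_nonneg (fun α _ => by positivity)
  have h5 : (∑ α ∈ s, ‖k α‖ * ‖H α‖)^(2:ℕ) ≤ (‖k‖ * ‖H‖)^(2:ℕ) := by
    rw [mul_pow]
    calc (∑ α ∈ s, ‖k α‖ * ‖H α‖)^(2:ℕ)
        ≤ (∑ α ∈ s, ‖k α‖^(2:ℕ)) * (∑ α ∈ s, ‖H α‖^(2:ℕ)) := hcs
      _ ≤ ‖k‖^(2:ℕ) * ‖H‖^(2:ℕ) := by
          refine mul_le_mul h1 h2 (Finset.sum_nonneg (fun α _ => by positivity)) (by positivity)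
  nlinarith [mul_nonneg (norm_nonneg k) (norm_nonneg H)]

lemma norm_tsum_pair_le (k : H2C) (H : lp (fun _ : MI => E) 2) :
    ‖∑' α, k α • H α‖ ≤ ‖k‖ * ‖H‖ := by
  refine le_trans (norm_tsum_le_tsum_norm ?_) ?_
  · refine (summable_pair k H).congr (fun α => ?_)
    rw [norm_smul]
  · refine le_trans (le_of_eq (tsum_congr (fun α => norm_smul (k α) (H α)))) ?_
    exact tsum_pair_le k H

/-- the pairing bilinear map `(k, H) ↦ ∑' α, k α • H α` -/
def pairingBil : H2C →ₗ[ℂ] lp (fun _ : MI => E) 2 →ₗ[ℂ] E :=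
  LinearMap.mk₂ ℂ (fun k H => ∑' α, k α • H α)
    (fun k k' H => by
      dsimp only
      have h1 : ∀ α : MI, ((k + k' : H2C) α) • H α = k α • H α + k' α • H α := by
        intro α
        have : (k + k' : H2C) α = k α + k' α := by rw [lp.coeFn_add]; rfl
        rw [this, add_smul]
      rw [tsum_congr h1]
      exact Summable.tsum_add (summable_smul_pair k H) (summable_smul_pair k' H))
    (fun c k H => by
      dsimp only
      have h1 : ∀ α : MI, ((c • k : H2C) α) • H α = c • (k α • H α) := by
        intro α
        have : (c • k : H2C) α = c * k α := by rw [lp.coeFn_smul]; rfl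
        rw [this, mul_smul]
      rw [tsum_congr h1]
      exact Summable.tsum_const_smul c (summable_smul_pair k H))
    (fun k H H' => by
      dsimp only
      have h1 : ∀ α : MI, k α • ((H + H' : lp (fun _ : MI => E) 2) α)
          = k α • H α + k α • H' α := by
        intro α
        have : (H + H' : lp (fun _ : MI => E) 2) α = H α + H' α := by rw [lp.coeFn_add]; rfl
        rw [this, smul_add]
      rw [tsum_congr h1]
      exact Summable.tsum_add (summable_smul_pair k H) (summable_smul_pair k H'))
    (fun c k H => by
      dsimp only
      have h1 : ∀ α : MI, k α • ((c • H : lp (fun _ : MI => E) 2) α)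
          = c • (k α • H α) := by
        intro α
        have : (c • H : lp (fun _ : MI => E) 2) α = c • H α := by rw [lp.coeFn_smul]; rfl
        rw [this, smul_comm]
      rw [tsum_congr h1]
      exact Summable.tsum_const_smul c (summable_smul_pair k H))

/-- the pairing as a continuous bilinear map -/
def pairingCLM : H2C →L[ℂ] lp (fun _ : MI => E) 2 →L[ℂ] E :=
  LinearMap.mkContinuous₂ pairingBil 1
    (fun k H => by
      rw [one_mul]
      exact norm_tsum_pair_le k H)

lemma pairingCLM_apply (k : H2C) (H : lp (fun _ : MI => E) 2) :
    pairingCLM k H = ∑' α, k α • H α := rfl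

lemma pairing_single (k : H2C) (α : MI) (x : E) :
    pairingCLM k (lp.single 2 α x) = k α • x := by
  rw [pairingCLM_apply]
  rw [tsum_eq_single α (fun β hβ => ?_)]
  · rw [lp.single_apply_self]
  · rw [lp.single_apply_ne (E := fun _ : MI => E) 2 α x hβ, smul_zero]

/-- `lp.single` as a continuous linear map -/
def singleCLM (α : MI) : E →L[ℂ] lp (fun _ : MI => E) 2 :=
  LinearMap.mkContinuous
    { toFun := fun x => lp.single 2 α x
      map_add' := fun x y => by
        apply Subtype.ext
        funext β
        have h1 : (lp.single 2 α (x + y) : lp (fun _ : MI => E) 2) β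
            = if h : β = α then x + y else 0 := by
          rw [lp.single_apply]
          by_cases h : β = α <;> simp [h]
        have h2 : ((lp.single 2 α x + lp.single 2 α y : lp (fun _ : MI => E) 2) : MI → E) β
            = (if h : β = α then x else 0) + (if h : β = α then y else 0) := by
          rw [lp.coeFn_add]
          show (lp.single 2 α x : lp (fun _ : MI => E) 2) β
            + (lp.single 2 α y : lp (fun _ : MI => E) 2) β = _
          rw [lp.single_apply, lp.single_apply]
          by_cases h : β = α <;> simp [h]
        show (lp.single 2 α (x + y) : lp (fun _ : MI => E) 2) β
            = ((lp.single 2 α x + lp.single 2 α y : lp (fun _ : MI => E) 2) : MI → E) β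
        rw [h1, h2]
        by_cases h : β = α <;> simp [h]
      map_smul' := fun c x => by
        exact lp.single_smul (E := fun _ : MI => E) 2 α c x }
    1
    (fun x => by
      rw [one_mul]
      exact le_of_eq (lp.norm_single (E := fun _ : MI => E) (by norm_num) α x))

lemma singleCLM_apply (α : MI) (x : E) : singleCLM α x = lp.single 2 α x := rfl

end Pairing


/-! ### Stage 5b: intertwining and multiplicativity -/

section Mult

variable {E : Type*} [NormedAddCommGroup E] [InnerProductSpace ℂ E] [CompleteSpace E]

lemma hasSum_singles (H : lp (fun _ : MI => E) 2) :
    HasSum (fun α : MI => lp.single 2 α (H α)) H :=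
  lp.hasSum_single (by norm_num) H

lemma pairing_hasSum (k : H2C) (H : lp (fun _ : MI => E) 2) :
    HasSum (fun α : MI => k α • H α) (pairingCLM k H) := by
  have h1 := (hasSum_singles H).mapL (pairingCLM k)
  have h2 : (fun α : MI => pairingCLM k (lp.single 2 α (H α)))
      = fun α : MI => k α • H α := funext fun α => pairing_single k α (H α)
  rwa [h2] at h1

lemma kernFun_succ (ζ : L2) (α : MI) (n : ℕ) :
    kernFun ζ (α + Finsupp.single n 1) = ζ n * kernFun ζ α := by
  show mon (fun m => ζ m) (α + Finsupp.single n 1) = ζ n * mon (fun m => ζ m) α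
  rw [mon_add_index, mon_single, pow_one, mul_comm]

lemma pairing_coordMult (ζ : L2) (hζ : ∀ n, ‖ζ n‖ < 1)
    (Mz : ℕ → lp (fun _ : MI => E) 2 →L[ℂ] lp (fun _ : MI => E) 2)
    (hMz : ∀ (n : ℕ) (α : MI) (x : E),
      Mz n (lp.single 2 α x) = lp.single 2 (α + Finsupp.single n 1) x)
    (n : ℕ) (H : lp (fun _ : MI => E) 2) :
    pairingCLM (kern ζ) (Mz n H) = ζ n • pairingCLM (kern ζ) H := by
  have h1 := ((hasSum_singles H).mapL (Mz n)).mapL (pairingCLM (kern ζ))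
  have h2 : (fun α : MI => pairingCLM (kern ζ) (Mz n (lp.single 2 α (H α))))
      = fun α : MI => ζ n • (kern ζ α • H α) := by
    funext α
    rw [hMz, pairing_single, kern_apply _ hζ, kern_apply _ hζ, kernFun_succ, mul_smul]
  rw [h2] at h1
  have h3 := (pairing_hasSum (kern ζ) H).const_smul (ζ n)
  exact h1.unique h3

end Mult

section Main

variable {E : Type u} [NormedAddCommGroup E] [InnerProductSpace ℂ E] [CompleteSpace E]
variable {F : Type v} [NormedAddCommGroup F] [InnerProductSpace ℂ F] [CompleteSpace F]
variable (T : lp (fun _ : MI => F) 2 →L[ℂ] lp (fun _ : MI => E) 2)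

/-- the symbol of the multiplier -/
def Psi (ζ : L2) : F →L[ℂ] E :=
  (pairingCLM (kern ζ)).comp (T.comp (singleCLM 0))

lemma Psi_apply (ζ : L2) (x : F) :
    Psi T ζ x = pairingCLM (kern ζ) (T (lp.single 2 0 x)) := rfl

variable {Mz : ℕ → lp (fun _ : MI => E) 2 →L[ℂ] lp (fun _ : MI => E) 2}
variable {Mxi : ℕ → lp (fun _ : MI => F) 2 →L[ℂ] lp (fun _ : MI => F) 2}

lemma T_single
    (hMz : ∀ (n : ℕ) (α : MI) (x : E),
      Mz n (lp.single 2 α x) = lp.single 2 (α + Finsupp.single n 1) x)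
    (hMxi : ∀ (n : ℕ) (α : MI) (x : F),
      Mxi n (lp.single 2 α x) = lp.single 2 (α + Finsupp.single n 1) x)
    (hT : ∀ n, T.comp (Mxi n) = (Mz n).comp T)
    (ζ : L2) (hζ : ∀ n, ‖ζ n‖ < 1) :
    ∀ (d : ℕ) (α : MI), deg α = d → ∀ x : F,
      pairingCLM (kern ζ) (T (lp.single 2 α x)) = kernFun ζ α • Psi T ζ x := by
  intro d
  induction d with
  | zero =>
    intro α hα x
    have h0 : α = 0 := deg_eq_zero hα
    subst h0
    have h1 : kernFun ζ 0 = 1 := mon_zero _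
    rw [h1, one_smul, Psi_apply]
  | succ d ih =>
    intro α hα x
    have hα0 : α ≠ 0 := by
      intro h
      rw [h, deg_zero] at hα
      omega
    obtain ⟨n, α', hdecomp, hdeg⟩ := exists_decomp hα0
    have hd' : deg α' = d := by omega
    have hsingle : lp.single 2 α x = Mxi n (lp.single 2 α' x) := by
      rw [hMxi, ← hdecomp]
    rw [hsingle]
    have hTM : T (Mxi n (lp.single 2 α' x)) = Mz n (T (lp.single 2 α' x)) := by
      have h2 := ContinuousLinearMap.ext_iff.1 (hT n) (lp.single 2 α' x)
      simpa using h2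
    rw [hTM, pairing_coordMult ζ hζ Mz hMz n _, ih α' hd' x, hdecomp, kernFun_succ,
      mul_smul]

lemma mult_property
    (hMz : ∀ (n : ℕ) (α : MI) (x : E),
      Mz n (lp.single 2 α x) = lp.single 2 (α + Finsupp.single n 1) x)
    (hMxi : ∀ (n : ℕ) (α : MI) (x : F),
      Mxi n (lp.single 2 α x) = lp.single 2 (α + Finsupp.single n 1) x)
    (hT : ∀ n, T.comp (Mxi n) = (Mz n).comp T)
    (ζ : L2) (hζ : ∀ n, ‖ζ n‖ < 1) (G : lp (fun _ : MI => F) 2) :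
    pairingCLM (kern ζ) (T G) = Psi T ζ (pairingCLM (kern ζ) G) := by
  have h1 := ((hasSum_singles G).mapL T).mapL (pairingCLM (kern ζ))
  have h2 : (fun α : MI => pairingCLM (kern ζ) (T (lp.single 2 α (G α))))
      = fun α : MI => kernFun ζ α • Psi T ζ (G α) :=
    funext fun α => T_single T hMz hMxi hT ζ hζ (deg α) α rfl (G α)
  rw [h2] at h1
  have h3 := (pairing_hasSum (kern ζ) G).mapL (Psi T ζ)
  have h4 : (fun α : MI => Psi T ζ (kern ζ α • G α))
      = fun α : MI => kernFun ζ α • Psi T ζ (G α) := by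
    funext α
    rw [map_smul, kern_apply _ hζ]
  rw [h4] at h3
  exact h1.unique h3

end Main


/-! ### Stage 5c: kernel vectors and the norm bound -/

section KVec

variable {E : Type*} [NormedAddCommGroup E] [InnerProductSpace ℂ E] [CompleteSpace E]

/-- kernel vector with values conjugated -/
def kvecFun (ζ : L2) (e : E) : MI → E :=
  fun α => (starRingEnd ℂ) (kernFun ζ α) • e

lemma kern_summable_sq (ζ : L2) (hζ : ∀ n, ‖ζ n‖ < 1) :
    Summable (fun α : MI => ‖kernFun ζ α‖ ^ (2:ℕ)) := by
  have h := lp2_summable_sq (kern ζ)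
  refine h.congr (fun α => ?_)
  rw [kern_apply ζ hζ]

lemma kvec_memℓp (ζ : L2) (hζ : ∀ n, ‖ζ n‖ < 1) (e : E) :
    Memℓp (kvecFun ζ e) 2 := by
  refine memℓp_two_of_sq _ ?_
  have h1 : ∀ α : MI, ‖kvecFun ζ e α‖ ^ (2:ℕ)
      = ‖kernFun ζ α‖ ^ (2:ℕ) * ‖e‖ ^ (2:ℕ) := by
    intro α
    rw [kvecFun, norm_smul, RCLike.norm_conj, mul_pow]
  refine Summable.congr ?_ (fun α => (h1 α).symm)
  exact (kern_summable_sq ζ hζ).mul_right _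

/-- kernel vector in the vector-valued Hardy space -/
def kvec (ζ : L2) (hζ : ∀ n, ‖ζ n‖ < 1) (e : E) : lp (fun _ : MI => E) 2 :=
  ⟨kvecFun ζ e, kvec_memℓp ζ hζ e⟩

lemma kvec_apply (ζ : L2) (hζ : ∀ n, ‖ζ n‖ < 1) (e : E) (α : MI) :
    kvec ζ hζ e α = (starRingEnd ℂ) (kernFun ζ α) • e := rfl

lemma kvec_norm (ζ : L2) (hζ : ∀ n, ‖ζ n‖ < 1) (e : E) :
    ‖kvec ζ hζ e‖ = ‖kern ζ‖ * ‖e‖ := by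
  have h1 : ‖kvec ζ hζ e‖ ^ (2:ℕ) = (‖kern ζ‖ * ‖e‖) ^ (2:ℕ) := by
    rw [lp2_norm_sq (kvec ζ hζ e), mul_pow, lp2_norm_sq (kern ζ)]
    rw [← tsum_mul_right]
    refine tsum_congr (fun α => ?_)
    rw [kvec_apply, norm_smul, RCLike.norm_conj, mul_pow, kern_apply ζ hζ]
  have h2 : (0:ℝ) ≤ ‖kvec ζ hζ e‖ := norm_nonneg _
  have h3 : (0:ℝ) ≤ ‖kern ζ‖ * ‖e‖ := by positivity
  calc ‖kvec ζ hζ e‖ = Real.sqrt (‖kvec ζ hζ e‖ ^ (2:ℕ)) := by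
        rw [Real.sqrt_sq h2]
    _ = Real.sqrt ((‖kern ζ‖ * ‖e‖) ^ (2:ℕ)) := by rw [h1]
    _ = ‖kern ζ‖ * ‖e‖ := Real.sqrt_sq h3

lemma kern_norm_ge_one (ζ : L2) (hζ : ∀ n, ‖ζ n‖ < 1) : 1 ≤ ‖kern ζ‖ := by
  have h1 : kern ζ (0:MI) = 1 := by
    rw [kern_apply ζ hζ]
    exact mon_zero _
  calc (1:ℝ) = ‖kern ζ (0:MI)‖ := by rw [h1]; simp
    _ ≤ ‖kern ζ‖ := lp.norm_apply_le_norm (by norm_num) (kern ζ) 0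

lemma inner_kvec (ζ : L2) (hζ : ∀ n, ‖ζ n‖ < 1) (e : E)
    (H : lp (fun _ : MI => E) 2) :
    (inner ℂ (kvec ζ hζ e) H : ℂ) = inner ℂ e (pairingCLM (kern ζ) H) := by
  rw [lp.inner_eq_tsum]
  have h1 : ∀ α : MI, (inner ℂ (kvec ζ hζ e α) (H α) : ℂ)
      = kernFun ζ α * inner ℂ e (H α) := by
    intro α
    rw [kvec_apply, inner_smul_left]
    simp
  rw [tsum_congr h1, pairingCLM_apply]
  have h2 := ContinuousLinearMap.map_tsum (innerSL ℂ e) (summable_smul_pair (kern ζ) H)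
  calc ∑' α : MI, kernFun ζ α * inner ℂ e (H α)
      = ∑' α : MI, (innerSL ℂ e) (kern ζ α • H α) := by
        refine tsum_congr (fun α => ?_)
        rw [innerSL_apply_apply, inner_smul_right, kern_apply ζ hζ]
    _ = (innerSL ℂ e) (∑' α : MI, kern ζ α • H α) := h2.symm
    _ = inner ℂ e (∑' α : MI, kern ζ α • H α) := by rw [innerSL_apply_apply]

end KVec

section NormBound

variable {E : Type u} [NormedAddCommGroup E] [InnerProductSpace ℂ E] [CompleteSpace E]
variable {F : Type v} [NormedAddCommGroup F] [InnerProductSpace ℂ F] [CompleteSpace F]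
variable (T : lp (fun _ : MI => F) 2 →L[ℂ] lp (fun _ : MI => E) 2)
variable {Mz : ℕ → lp (fun _ : MI => E) 2 →L[ℂ] lp (fun _ : MI => E) 2}
variable {Mxi : ℕ → lp (fun _ : MI => F) 2 →L[ℂ] lp (fun _ : MI => F) 2}

lemma adjoint_kvec
    (hMz : ∀ (n : ℕ) (α : MI) (x : E),
      Mz n (lp.single 2 α x) = lp.single 2 (α + Finsupp.single n 1) x)
    (hMxi : ∀ (n : ℕ) (α : MI) (x : F),
      Mxi n (lp.single 2 α x) = lp.single 2 (α + Finsupp.single n 1) x)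
    (hT : ∀ n, T.comp (Mxi n) = (Mz n).comp T)
    (ζ : L2) (hζ : ∀ n, ‖ζ n‖ < 1) (e : E) :
    ContinuousLinearMap.adjoint T (kvec ζ hζ e)
      = kvec ζ hζ (ContinuousLinearMap.adjoint (Psi T ζ) e) := by
  refine ext_inner_right ℂ (fun G => ?_)
  rw [ContinuousLinearMap.adjoint_inner_left, inner_kvec, inner_kvec,
    mult_property T hMz hMxi hT ζ hζ G, ← ContinuousLinearMap.adjoint_inner_left]

lemma Psi_norm_le
    (hMz : ∀ (n : ℕ) (α : MI) (x : E),
      Mz n (lp.single 2 α x) = lp.single 2 (α + Finsupp.single n 1) x)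
    (hMxi : ∀ (n : ℕ) (α : MI) (x : F),
      Mxi n (lp.single 2 α x) = lp.single 2 (α + Finsupp.single n 1) x)
    (hT : ∀ n, T.comp (Mxi n) = (Mz n).comp T)
    (ζ : L2) (hζ : ∀ n, ‖ζ n‖ < 1) :
    ‖Psi T ζ‖ ≤ ‖T‖ := by
  have hk1 : (1:ℝ) ≤ ‖kern ζ‖ := kern_norm_ge_one ζ hζ
  have hk0 : (0:ℝ) < ‖kern ζ‖ := lt_of_lt_of_le one_pos hk1
  have hadj : ‖ContinuousLinearMap.adjoint (Psi T ζ)‖ ≤ ‖T‖ := by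
    refine ContinuousLinearMap.opNorm_le_bound _ (norm_nonneg T) (fun e => ?_)
    have h1 : ‖kern ζ‖ * ‖ContinuousLinearMap.adjoint (Psi T ζ) e‖
        = ‖kvec ζ hζ (ContinuousLinearMap.adjoint (Psi T ζ) e)‖ :=
      (kvec_norm ζ hζ _).symm
    have h2 : ‖kvec ζ hζ (ContinuousLinearMap.adjoint (Psi T ζ) e)‖
        ≤ ‖T‖ * (‖kern ζ‖ * ‖e‖) := by
      rw [← adjoint_kvec T hMz hMxi hT ζ hζ e]
      calc ‖ContinuousLinearMap.adjoint T (kvec ζ hζ e)‖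
          ≤ ‖ContinuousLinearMap.adjoint T‖ * ‖kvec ζ hζ e‖ :=
            ContinuousLinearMap.le_opNorm _ _
        _ = ‖T‖ * (‖kern ζ‖ * ‖e‖) := by
            rw [LinearIsometryEquiv.norm_map, kvec_norm]
    have h3 : ‖kern ζ‖ * ‖ContinuousLinearMap.adjoint (Psi T ζ) e‖
        ≤ ‖kern ζ‖ * (‖T‖ * ‖e‖) := by
      rw [h1]
      calc ‖kvec ζ hζ (ContinuousLinearMap.adjoint (Psi T ζ) e)‖
          ≤ ‖T‖ * (‖kern ζ‖ * ‖e‖) := h2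
        _ = ‖kern ζ‖ * (‖T‖ * ‖e‖) := by ring
    exact le_of_mul_le_mul_left h3 hk0
  calc ‖Psi T ζ‖ = ‖ContinuousLinearMap.adjoint (Psi T ζ)‖ :=
        (LinearIsometryEquiv.norm_map ContinuousLinearMap.adjoint (Psi T ζ)).symm
    _ ≤ ‖T‖ := hadj

end NormBound

end
end DCP

namespace DCPaper

/-- **Proposition 2.5.** Let `𝐌_ζ`, `𝐌_ξ` be the tuples of coordinate multiplication
operators on `H²_E(𝔻_2^∞)` and `H²_F(𝔻_2^∞)`. If a bounded operator
`T : H²_F(𝔻_2^∞) → H²_E(𝔻_2^∞)` satisfies `T M_{ξ_n} = M_{ζ_n} T` for all `n`, then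
there is a uniformly bounded holomorphic function `Ψ : 𝔻_2^∞ → B(F, E)` with `T = M_Ψ`,
i.e. `(T G)(ζ) = Ψ(ζ) G(ζ)` for all `G` and all `ζ ∈ 𝔻_2^∞`. -/
theorem intertwiner_is_multiplication
    {E : Type u} [NormedAddCommGroup E] [InnerProductSpace ℂ E] [CompleteSpace E]
    {F : Type v} [NormedAddCommGroup F] [InnerProductSpace ℂ F] [CompleteSpace F]
    (Mz : ℕ → lp (fun _ : (ℕ →₀ ℕ) => E) 2 →L[ℂ] lp (fun _ : (ℕ →₀ ℕ) => E) 2)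
    (Mxi : ℕ → lp (fun _ : (ℕ →₀ ℕ) => F) 2 →L[ℂ] lp (fun _ : (ℕ →₀ ℕ) => F) 2)
    (hMz : IsCoordMult Mz) (hMxi : IsCoordMult Mxi)
    (T : lp (fun _ : (ℕ →₀ ℕ) => F) 2 →L[ℂ] lp (fun _ : (ℕ →₀ ℕ) => E) 2)
    (hT : ∀ n, T.comp (Mxi n) = (Mz n).comp T) :
    ∃ Ψ : lp (fun _ : ℕ => ℂ) 2 → (F →L[ℂ] E),
      DifferentiableOn ℂ Ψ hilbertMultidisc ∧
      (∃ C : ℝ, ∀ ζ ∈ hilbertMultidisc, ‖Ψ ζ‖ ≤ C) ∧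
      ∀ (G : lp (fun _ : (ℕ →₀ ℕ) => F) 2), ∀ ζ ∈ hilbertMultidisc,
        hardyEval (T G) (fun n => ζ n) = Ψ ζ (hardyEval G (fun n => ζ n)) := by
  classical
  refine ⟨fun ζ => DCP.Psi T ζ, ?_, ⟨‖T‖, fun ζ hζ => DCP.Psi_norm_le T hMz hMxi hT ζ hζ⟩, ?_⟩
  · -- differentiability
    intro ζ hζ
    have hζ' : ∀ n, ‖ζ n‖ < 1 := hζ
    set Q : DCP.H2C →L[ℂ] (F →L[ℂ] E) :=
      ((ContinuousLinearMap.compL ℂ F (lp (fun _ : DCP.MI => E) 2) E).flip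
        (T.comp (DCP.singleCLM 0))).comp DCP.pairingCLM with hQ
    have hrepr : (fun ζ : lp (fun _ : ℕ => ℂ) 2 => DCP.Psi T ζ) = fun ζ => Q (DCP.kern ζ) := by
      funext ζ'
      rw [hQ]
      rfl
    rw [hrepr]
    have h1 : DifferentiableAt ℂ DCP.kern ζ := DCP.kern_differentiableAt ζ hζ'
    exact (Q.differentiableAt.comp ζ h1).differentiableWithinAt
  · -- evaluation identity
    intro G ζ hζ
    have hζ' : ∀ n, ‖ζ n‖ < 1 := hζ
    have h1 : hardyEval (T G) (fun n => ζ n) = DCP.pairingCLM (DCP.kern ζ) (T G) := by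
      rw [DCP.pairingCLM_apply]
      refine tsum_congr (fun α => ?_)
      rw [DCP.kern_apply ζ hζ']
      rfl
    have h2 : hardyEval G (fun n => ζ n) = DCP.pairingCLM (DCP.kern ζ) G := by
      rw [DCP.pairingCLM_apply]
      refine tsum_congr (fun α => ?_)
      rw [DCP.kern_apply ζ hζ']
      rfl
    rw [h1, h2]
    exact DCP.mult_property T hMz hMxi hT ζ hζ' G


end DCPaper

end
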